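/- arXiv:1305.2385 — 3 statements merged into one kernel-verified Lean document; each statement's English description precedes it below -/
import Mathlib

section
/- Second-order constraints at a zero of a witness: if Ω is an entanglement witness and (φ₀,χ₀) is a zero of Ω, then H_Ω(φ₀,χ₀;ξ,ζ) ≥ 0 for all vectors ξ ∈ ℂ^Na and ζ ∈ ℂ^Nb. -/
open Matrix
open scoped ComplexOrder

noncomputable section

namespace EW

/-- Complex square matrices indexed by `Fin Na × Fin Nb`. -/
abbrev Mat (Na Nb : ℕ) := Matrix (Fin Na × Fin Nb) (Fin Na × Fin Nb) ℂ

/-- Kronecker product of vectors: `(φ⊗χ)_(i,j) = φ_i · χ_j`. -/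
def kron {Na Nb : ℕ} (φ : Fin Na → ℂ) (χ : Fin Nb → ℂ) : Fin Na × Fin Nb → ℂ :=
  fun p => φ p.1 * χ p.2

/-- Sesquilinear pairing `xᴴ A y`. -/
def pair {n : Type*} [Fintype n] (A : Matrix n n ℂ) (x y : n → ℂ) : ℂ :=
  star x ⬝ᵥ A.mulVec y

/-- The biquadratic form `f_A(φ,χ) = (φ⊗χ)ᴴ A (φ⊗χ)`. -/
def biquad {Na Nb : ℕ} (A : Mat Na Nb) (φ : Fin Na → ℂ) (χ : Fin Nb → ℂ) : ℂ :=
  pair A (kron φ χ) (kron φ χ)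

/-- An entanglement witness: a Hermitian matrix whose biquadratic form is nonnegative. -/
def IsWitness {Na Nb : ℕ} (A : Mat Na Nb) : Prop :=
  A.IsHermitian ∧ ∀ φ χ, 0 ≤ biquad A φ χ

/-- `S₁°`, the set of trace-one entanglement witnesses. -/
def witnessSet (Na Nb : ℕ) : Set (Mat Na Nb) :=
  { Ω | IsWitness Ω ∧ Ω.trace = 1 }

/-- A zero of a witness: a pair of nonzero vectors where the biquadratic form vanishes. -/
def IsZeroOf {Na Nb : ℕ} (Ω : Mat Na Nb) (φ₀ : Fin Na → ℂ) (χ₀ : Fin Nb → ℂ) : Prop :=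
  φ₀ ≠ 0 ∧ χ₀ ≠ 0 ∧ biquad Ω φ₀ χ₀ = 0

/-- The Hessian form
`H_A(φ₀,χ₀;ξ,ζ) = Re[(ξ⊗χ₀)ᴴA(ξ⊗χ₀) + (φ₀⊗ζ)ᴴA(φ₀⊗ζ) + 2(φ₀⊗ζ)ᴴA(ξ⊗χ₀) + 2(φ₀⊗χ₀)ᴴA(ξ⊗ζ)]`. -/
def hessForm {Na Nb : ℕ} (A : Mat Na Nb) (φ₀ : Fin Na → ℂ) (χ₀ : Fin Nb → ℂ)
    (ξ : Fin Na → ℂ) (ζ : Fin Nb → ℂ) : ℝ :=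
  (pair A (kron ξ χ₀) (kron ξ χ₀) + pair A (kron φ₀ ζ) (kron φ₀ ζ)
    + 2 * pair A (kron φ₀ ζ) (kron ξ χ₀) + 2 * pair A (kron φ₀ χ₀) (kron ξ ζ)).re

/-- A Hessian zero of `Ω` at the zero `(φ₀,χ₀)`. -/
def IsHessianZeroAt {Na Nb : ℕ} (Ω : Mat Na Nb) (φ₀ : Fin Na → ℂ) (χ₀ : Fin Nb → ℂ)
    (ξ : Fin Na → ℂ) (ζ : Fin Nb → ℂ) : Prop :=
  (ξ, ζ) ≠ (0, 0) ∧ star φ₀ ⬝ᵥ ξ = 0 ∧ star χ₀ ⬝ᵥ ζ = 0 ∧ hessForm Ω φ₀ χ₀ ξ ζ = 0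

/-- A quadratic witness: a witness all of whose zeros have no Hessian zeros. -/
def IsQuadraticWitness {Na Nb : ℕ} (Ω : Mat Na Nb) : Prop :=
  IsWitness Ω ∧ ∀ φ₀ χ₀, IsZeroOf Ω φ₀ χ₀ → ∀ ξ ζ, ¬ IsHessianZeroAt Ω φ₀ χ₀ ξ ζ

/-- Partial transpose with respect to the second factor. -/
def ptrans {Na Nb : ℕ} (A : Mat Na Nb) : Mat Na Nb :=
  fun p q => A (p.1, q.2) (q.1, p.2)

/-- Euclidean norm of a complex vector. -/
def enorm {n : Type*} [Fintype n] (x : n → ℂ) : ℝ :=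
  Real.sqrt (star x ⬝ᵥ x).re

/-- Frobenius norm of a matrix. -/
def frobNorm {Na Nb : ℕ} (A : Mat Na Nb) : ℝ :=
  Real.sqrt (∑ i, ∑ j, ‖A i j‖ ^ 2)

/-- `S₁`, the set of separable states: the convex hull of normalized pure product states. -/
def sepSet (Na Nb : ℕ) : Set (Mat Na Nb) :=
  convexHull ℝ { M | ∃ (φ : Fin Na → ℂ) (χ : Fin Nb → ℂ), enorm (kron φ χ) = 1 ∧
    M = Matrix.vecMulVec (kron φ χ) (star (kron φ χ)) }

/-- `Γ` satisfies the constraint system of the witness `Ω`. -/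
def SatisfiesConstraints {Na Nb : ℕ} (Ω Γ : Mat Na Nb) : Prop :=
  (∀ φ₀ χ₀, IsZeroOf Ω φ₀ χ₀ →
    (∀ φ, pair Γ (kron φ χ₀) (kron φ₀ χ₀) = 0) ∧
    (∀ χ, pair Γ (kron φ₀ χ) (kron φ₀ χ₀) = 0)) ∧
  (∀ φ₀ χ₀, IsZeroOf Ω φ₀ χ₀ → ∀ ξ ζ, IsHessianZeroAt Ω φ₀ χ₀ ξ ζ →
    ∀ ξ' ζ', star φ₀ ⬝ᵥ ξ' = 0 → star χ₀ ⬝ᵥ ζ' = 0 →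
      hessForm Γ φ₀ χ₀ (ξ + ξ') (ζ + ζ') =
        hessForm Γ φ₀ χ₀ ξ ζ + hessForm Γ φ₀ χ₀ ξ' ζ') ∧
  (∀ φ₀ χ₀, IsZeroOf Ω φ₀ χ₀ → ∀ ξ ζ, IsHessianZeroAt Ω φ₀ χ₀ ξ ζ →
    (pair Γ (kron φ₀ ζ) (kron ξ ζ) + pair Γ (kron ξ χ₀) (kron ξ ζ)).re = 0)

end EW


/-!
Along the curve `t ↦ (φ₀ + tξ, χ₀ + tζ)` the biquadratic form of `Ω` is a real quartic in `t`
that vanishes at `t = 0`. Adding its values at `t` and `-t` cancels the odd terms and leaves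
`2 t² H_Ω(φ₀,χ₀;ξ,ζ) + 2 t⁴ f_Ω(ξ,ζ) ≥ 0`; dividing by `t²` and letting `t → 0` gives `H_Ω ≥ 0`.
-/

open Filter Topology

namespace EW

section Pair

variable {n : Type*} [Fintype n] (A : Matrix n n ℂ)

lemma pair_add_left (x x' y : n → ℂ) : pair A (x + x') y = pair A x y + pair A x' y := by
  simp only [pair, add_dotProduct, star_add]

lemma pair_add_right (x y y' : n → ℂ) : pair A x (y + y') = pair A x y + pair A x y' := by
  simp only [pair, Matrix.mulVec_add, dotProduct_add]

lemma pair_sub_left (x x' y : n → ℂ) : pair A (x - x') y = pair A x y - pair A x' y := by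
  simp only [pair, sub_dotProduct, star_sub]

lemma pair_sub_right (x y y' : n → ℂ) : pair A x (y - y') = pair A x y - pair A x y' := by
  simp only [pair, Matrix.mulVec_sub, dotProduct_sub]

lemma pair_ofReal_smul_left (t : ℝ) (x y : n → ℂ) :
    pair A ((t : ℂ) • x) y = t * pair A x y := by
  simp [pair, smul_dotProduct]

lemma pair_smul_right (t : ℂ) (x y : n → ℂ) : pair A x (t • y) = t * pair A x y := by
  simp only [pair, Matrix.mulVec_smul, dotProduct_smul, smul_eq_mul]

lemma pair_swap {A : Matrix n n ℂ} (hA : A.IsHermitian) (x y : n → ℂ) :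
    pair A y x = star (pair A x y) := by
  rw [pair, pair, ← star_star (star y ⬝ᵥ A *ᵥ x), star_dotProduct, star_star,
    Matrix.star_mulVec, hA.eq, Matrix.dotProduct_mulVec]

lemma re_pair_swap {A : Matrix n n ℂ} (hA : A.IsHermitian) (x y : n → ℂ) :
    (pair A y x).re = (pair A x y).re := by
  rw [pair_swap hA, Complex.star_def, Complex.conj_re]

lemma pair_quadratic_add_pair_quadratic_neg (a b c : n → ℂ) (t : ℝ) :
    pair A (a + (t : ℂ) • b + (t : ℂ) ^ 2 • c) (a + (t : ℂ) • b + (t : ℂ) ^ 2 • c)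
      + pair A (a - (t : ℂ) • b + (t : ℂ) ^ 2 • c) (a - (t : ℂ) • b + (t : ℂ) ^ 2 • c)
      = 2 * pair A a a + 2 * t ^ 2 * (pair A a c + pair A c a + pair A b b)
        + 2 * t ^ 4 * pair A c c := by
  simp only [← Complex.ofReal_pow, pair_add_left, pair_add_right, pair_sub_left, pair_sub_right,
    pair_ofReal_smul_left, pair_smul_right]
  push_cast
  ring

end Pair

variable {Na Nb : ℕ}

lemma kron_add_smul (φ ξ : Fin Na → ℂ) (χ ζ : Fin Nb → ℂ) (t : ℂ) :
    kron (φ + t • ξ) (χ + t • ζ) = kron φ χ + t • (kron ξ χ + kron φ ζ) + t ^ 2 • kron ξ ζ := by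
  funext p
  simp only [kron, Pi.add_apply, Pi.smul_apply, smul_eq_mul]
  ring

lemma kron_sub_smul (φ ξ : Fin Na → ℂ) (χ ζ : Fin Nb → ℂ) (t : ℂ) :
    kron (φ - t • ξ) (χ - t • ζ) = kron φ χ - t • (kron ξ χ + kron φ ζ) + t ^ 2 • kron ξ ζ := by
  funext p
  simp only [kron, Pi.add_apply, Pi.sub_apply, Pi.smul_apply, smul_eq_mul]
  ring

lemma hessForm_eq_re {A : Mat Na Nb} (hA : A.IsHermitian) (φ ξ : Fin Na → ℂ) (χ ζ : Fin Nb → ℂ) :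
    hessForm A φ χ ξ ζ = (pair A (kron φ χ) (kron ξ ζ) + pair A (kron ξ ζ) (kron φ χ)
      + pair A (kron ξ χ + kron φ ζ) (kron ξ χ + kron φ ζ)).re := by
  simp only [hessForm, pair_add_left, pair_add_right, Complex.add_re, re_pair_swap hA (kron φ χ),
    re_pair_swap hA (kron φ ζ) (kron ξ χ), Complex.mul_re, Complex.re_ofNat, Complex.im_ofNat]
  ring

lemma re_biquad_add_re_biquad_neg {A : Mat Na Nb} (hA : A.IsHermitian)
    (φ ξ : Fin Na → ℂ) (χ ζ : Fin Nb → ℂ) (t : ℝ) :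
    (biquad A (φ + (t : ℂ) • ξ) (χ + (t : ℂ) • ζ)).re
      + (biquad A (φ - (t : ℂ) • ξ) (χ - (t : ℂ) • ζ)).re
      = 2 * (biquad A φ χ).re + 2 * t ^ 2 * hessForm A φ χ ξ ζ
        + 2 * t ^ 4 * (biquad A ξ ζ).re := by
  rw [← Complex.add_re, biquad, biquad, kron_add_smul, kron_sub_smul,
    pair_quadratic_add_pair_quadratic_neg, hessForm_eq_re hA, biquad, biquad]
  simp only [← Complex.ofReal_pow, ← Complex.ofReal_ofNat, ← Complex.ofReal_mul, Complex.add_re,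
    Complex.re_ofReal_mul]

lemma IsWitness.re_biquad_nonneg {Ω : Mat Na Nb} (hΩ : IsWitness Ω)
    (φ : Fin Na → ℂ) (χ : Fin Nb → ℂ) : 0 ≤ (biquad Ω φ χ).re :=
  (Complex.nonneg_iff.mp (hΩ.2 φ χ)).1

end EW

lemma nonneg_of_forall_sq_mul_add_pow_four_mul_nonneg {a c : ℝ}
    (h : ∀ t : ℝ, 0 ≤ t ^ 2 * a + t ^ 4 * c) : 0 ≤ a := by
  have hlim : Tendsto (fun t : ℝ => a + t ^ 2 * c) (𝓝[≠] 0) (𝓝 a) := by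
    have hcont : Continuous fun t : ℝ => a + t ^ 2 * c := by fun_prop
    simpa using (hcont.tendsto 0).mono_left nhdsWithin_le_nhds
  refine ge_of_tendsto hlim (eventually_nhdsWithin_of_forall fun t (ht : t ≠ 0) => ?_)
  refine nonneg_of_mul_nonneg_right (a := t ^ 2) ?_ (by positivity)
  linarith [h t]

open EW
theorem second_order_constraints (Na Nb : ℕ) (Ω : Mat Na Nb) (hΩ : IsWitness Ω)
    (φ₀ : Fin Na → ℂ) (χ₀ : Fin Nb → ℂ) (hz : IsZeroOf Ω φ₀ χ₀) :
    ∀ (ξ : Fin Na → ℂ) (ζ : Fin Nb → ℂ), 0 ≤ hessForm Ω φ₀ χ₀ ξ ζ := by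
  intro ξ ζ
  refine nonneg_of_forall_sq_mul_add_pow_four_mul_nonneg (c := (biquad Ω ξ ζ).re) fun t => ?_
  have hsum := re_biquad_add_re_biquad_neg hΩ.1 φ₀ ξ χ₀ ζ t
  rw [hz.2.2, Complex.zero_re] at hsum
  linarith [hΩ.re_biquad_nonneg (φ₀ + (t : ℂ) • ξ) (χ₀ + (t : ℂ) • ζ),
    hΩ.re_biquad_nonneg (φ₀ - (t : ℂ) • ξ) (χ₀ - (t : ℂ) • ζ)]
end
end

section
/- The extreme points of the face of S₁ dual to a witness are exactly the pure product states built from its zeros: for every Ω ∈ S₁°, Set.extremePoints ℝ {ρ ∈ S₁ | Tr(Ωρ) = 0} = { (φ⊗χ)(φ⊗χ)ᴴ | φ ∈ ℂ^Na, χ ∈ ℂ^Nb, ‖φ⊗χ‖ = 1 and f_Ω(φ,χ) = 0 }. -/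
open Matrix
open scoped ComplexOrder

noncomputable section

/-!
`ρ ↦ Tr(Ωρ)` is a real-linear functional that is nonnegative on `S₁`, so its zero set in `S₁` is
a face, and the extreme points of a face are the extreme points of `S₁` lying in it. The extreme
points of `S₁` are the pure product states: they lie among the generators of the convex hull, and
a pure state `vvᴴ` is extreme even among all density matrices, because a density matrix occurring
in a decomposition of `vvᴴ` annihilates `v^⊥` and is therefore `vvᴴ`. Finally
`Tr(Ω (φ⊗χ)(φ⊗χ)ᴴ) = f_Ω(φ,χ)`.
-/

section Faces

variable {𝕜 E F : Type*} [Field 𝕜] [PartialOrder 𝕜]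
  [AddCommGroup E] [Module 𝕜 E] [AddCommGroup F] [PartialOrder F] [IsOrderedAddMonoid F]
  [Module 𝕜 F] [PosSMulMono 𝕜 F]

theorem isExtreme_setOf_eq_zero (ℓ : E →ₗ[𝕜] F) {A : Set E} (hA : ∀ x ∈ A, 0 ≤ ℓ x) :
    IsExtreme 𝕜 A {x ∈ A | ℓ x = 0} := by
  refine ⟨Set.sep_subset _ _, ?_⟩
  rintro x₁ hx₁ x₂ hx₂ x ⟨-, hx⟩ ⟨a, b, ha, hb, -, rfl⟩
  rw [map_add, map_smul, map_smul] at hx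
  have h := (add_eq_zero_iff_of_nonneg (smul_nonneg ha.le (hA x₁ hx₁))
    (smul_nonneg hb.le (hA x₂ hx₂))).1 hx
  exact ⟨hx₁, (smul_eq_zero_iff_right ha.ne').1 h.1⟩

end Faces

namespace Matrix

open scoped ComplexOrder

variable {𝕜 n : Type*} [RCLike 𝕜] [Fintype n]

theorem trace_mul_vecMulVec_star {R : Type*} [CommSemiring R] [StarRing R]
    (A : Matrix n n R) (v : n → R) : (A * vecMulVec v (star v)).trace = star v ⬝ᵥ A *ᵥ v := by
  rw [mul_vecMulVec, trace_vecMulVec, dotProduct_comm]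

theorem PosSemidef.mulVec_eq_zero_of_mem_openSegment {A B C : Matrix n n 𝕜}
    (hA : A.PosSemidef) (hB : B.PosSemidef) (hC : C ∈ openSegment ℝ A B) {w : n → 𝕜}
    (hw : C *ᵥ w = 0) : A *ᵥ w = 0 := by
  obtain ⟨a, b, ha, hb, -, rfl⟩ := hC
  have hsum : a • (star w ⬝ᵥ A *ᵥ w) + b • (star w ⬝ᵥ B *ᵥ w) = 0 := by
    rw [← dotProduct_smul, ← dotProduct_smul, ← dotProduct_add, ← smul_mulVec, ← smul_mulVec,
      ← add_mulVec, hw, dotProduct_zero]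
  have h := (add_eq_zero_iff_of_nonneg (smul_nonneg ha.le (hA.dotProduct_mulVec_nonneg w))
    (smul_nonneg hb.le (hB.dotProduct_mulVec_nonneg w))).1 hsum
  exact (hA.dotProduct_mulVec_zero_iff w).1 ((smul_eq_zero_iff_right ha.ne').1 h.1)

theorem IsHermitian.eq_trace_smul_vecMulVec {A : Matrix n n 𝕜} (hA : A.IsHermitian)
    {v : n → 𝕜} (hv : star v ⬝ᵥ v = 1) (hker : ∀ w, star v ⬝ᵥ w = 0 → A *ᵥ w = 0) :
    A = A.trace • vecMulVec v (star v) := by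
  classical
  set P := vecMulVec v (star v)
  -- `A (1 - P) = 0` since `(1 - P) w ⊥ v`; hermiticity then gives `A = P A P`.
  have hAP : A * P = A := by
    refine ext_of_mulVec_single fun j => ?_
    rw [← mulVec_mulVec, ← sub_eq_zero, ← mulVec_sub]
    refine hker _ ?_
    rw [dotProduct_sub, vecMulVec_mulVec, op_smul_eq_smul, dotProduct_smul, hv, smul_eq_mul,
      mul_one, sub_self]
  have hPA : P * A = A := by
    simpa [P, conjTranspose_mul, hA.eq] using congrArg (·ᴴ) hAP
  have hA_eq : A = (star v ⬝ᵥ A *ᵥ v) • P := by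
    calc A = P * A * P := by rw [hPA, hAP]
      _ = _ := by
        rw [vecMulVec_mul, vecMulVec_mul_vecMulVec, vecMulVec_smul, dotProduct_mulVec]
  have htr := congrArg trace hA_eq
  rw [trace_smul, trace_vecMulVec, dotProduct_comm v, hv, smul_eq_mul, mul_one] at htr
  rwa [htr]

def densityMatrices (n 𝕜 : Type*) [Fintype n] [RCLike 𝕜] : Set (Matrix n n 𝕜) :=
  {ρ | ρ.PosSemidef ∧ ρ.trace = 1}

theorem convex_densityMatrices : Convex ℝ (densityMatrices n 𝕜) := by
  rintro A ⟨hA, hA1⟩ B ⟨hB, hB1⟩ a b ha hb hab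
  refine ⟨(hA.smul ha).add (hB.smul hb), ?_⟩
  rw [trace_add, trace_smul, trace_smul, hA1, hB1, ← add_smul, hab, one_smul]

theorem vecMulVec_mem_extremePoints_densityMatrices {v : n → 𝕜} (hv : star v ⬝ᵥ v = 1) :
    vecMulVec v (star v) ∈ (densityMatrices n 𝕜).extremePoints ℝ := by
  refine ⟨⟨posSemidef_vecMulVec_self_star v, by rw [trace_vecMulVec, dotProduct_comm, hv]⟩, ?_⟩
  rintro A ⟨hA, hA1⟩ B ⟨hB, -⟩ hseg
  have hker : ∀ w, star v ⬝ᵥ w = 0 → A *ᵥ w = 0 := fun w hw =>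
    hA.mulVec_eq_zero_of_mem_openSegment hB hseg <| by
      rw [vecMulVec_mulVec, hw, MulOpposite.op_zero, zero_smul]
  rw [hA.1.eq_trace_smul_vecMulVec hv hker, hA1, one_smul]

end Matrix

namespace EW

variable {Na Nb : ℕ}

def productStates (Na Nb : ℕ) : Set (Mat Na Nb) :=
  { M | ∃ (φ : Fin Na → ℂ) (χ : Fin Nb → ℂ), enorm (kron φ χ) = 1 ∧
    M = Matrix.vecMulVec (kron φ χ) (star (kron φ χ)) }

def traceMulLeft (Ω : Mat Na Nb) : Mat Na Nb →ₗ[ℝ] ℂ :=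
  ((Matrix.traceLinearMap _ ℂ ℂ).comp (LinearMap.mulLeft ℂ Ω)).restrictScalars ℝ

theorem dotProduct_star_self_eq_one_of_enorm_eq_one {n : Type*} [Fintype n] {x : n → ℂ}
    (h : enorm x = 1) : star x ⬝ᵥ x = 1 := by
  rw [enorm, Real.sqrt_eq_one] at h
  obtain ⟨-, him⟩ := Complex.nonneg_iff.1 (dotProduct_star_self_nonneg x)
  exact Complex.ext h him.symm

theorem trace_mul_vecMulVec_kron (A : Mat Na Nb) (φ : Fin Na → ℂ) (χ : Fin Nb → ℂ) :
    (A * Matrix.vecMulVec (kron φ χ) (star (kron φ χ))).trace = biquad A φ χ :=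
  Matrix.trace_mul_vecMulVec_star A (kron φ χ)

theorem sepSet_subset_densityMatrices :
    sepSet Na Nb ⊆ Matrix.densityMatrices (Fin Na × Fin Nb) ℂ := by
  refine convexHull_min ?_ Matrix.convex_densityMatrices
  rintro _ ⟨φ, χ, hn, rfl⟩
  refine ⟨Matrix.posSemidef_vecMulVec_self_star _, ?_⟩
  rw [Matrix.trace_vecMulVec, dotProduct_comm, dotProduct_star_self_eq_one_of_enorm_eq_one hn]

theorem extremePoints_sepSet : (sepSet Na Nb).extremePoints ℝ = productStates Na Nb := by
  refine Set.Subset.antisymm extremePoints_convexHull_subset ?_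
  rintro _ ⟨φ, χ, hn, rfl⟩
  refine inter_extremePoints_subset_extremePoints_of_subset sepSet_subset_densityMatrices
    ⟨subset_convexHull ℝ _ ⟨φ, χ, hn, rfl⟩, ?_⟩
  exact Matrix.vecMulVec_mem_extremePoints_densityMatrices
    (dotProduct_star_self_eq_one_of_enorm_eq_one hn)

theorem IsWitness.trace_mul_nonneg {Ω : Mat Na Nb} (hΩ : IsWitness Ω) {ρ : Mat Na Nb}
    (hρ : ρ ∈ sepSet Na Nb) : 0 ≤ (Ω * ρ).trace := by
  refine convexHull_min ?_ (convex_halfSpace_ge (traceMulLeft Ω).isLinear 0) hρ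
  rintro _ ⟨φ, χ, -, rfl⟩
  change 0 ≤ (Ω * _).trace
  rw [trace_mul_vecMulVec_kron]
  exact hΩ.2 φ χ

end EW

open EW
theorem extreme_points_of_dual_face (Na Nb : ℕ) (Ω : Mat Na Nb)
    (hΩ : Ω ∈ witnessSet Na Nb) :
    Set.extremePoints ℝ {ρ ∈ sepSet Na Nb | (Ω * ρ).trace = 0} =
    { M : Mat Na Nb | ∃ (φ : Fin Na → ℂ) (χ : Fin Nb → ℂ),
        EW.enorm (kron φ χ) = 1 ∧ biquad Ω φ χ = 0 ∧
        M = Matrix.vecMulVec (kron φ χ) (star (kron φ χ)) } := by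
  have hface : IsExtreme ℝ (sepSet Na Nb) {ρ ∈ sepSet Na Nb | (Ω * ρ).trace = 0} :=
    isExtreme_setOf_eq_zero (traceMulLeft Ω) fun _ => hΩ.1.trace_mul_nonneg
  rw [hface.extremePoints_eq, extremePoints_sepSet]
  ext M
  constructor
  · rintro ⟨⟨-, hM⟩, φ, χ, hn, rfl⟩
    exact ⟨φ, χ, hn, trace_mul_vecMulVec_kron Ω φ χ ▸ hM, rfl⟩
  · rintro ⟨φ, χ, hn, hzero, rfl⟩
    refine ⟨⟨subset_convexHull ℝ _ ⟨φ, χ, hn, rfl⟩, ?_⟩, φ, χ, hn, rfl⟩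
    rwa [trace_mul_vecMulVec_kron]
end
end

section
/- Sufficient conditions for optimality: let Ω be an entanglement witness such that the vectors φ₀⊗χ₀, taken over all zeros (φ₀,χ₀) of Ω, span ℂ^(Fin Na × Fin Nb). Then Ω is optimal: for every entanglement witness Ω₀, every positive semidefinite Hermitian matrix P, and every p ∈ (0,1), if Ω = (1−p)·Ω₀ + p·P then P = 0. If moreover the partially conjugated vectors φ₀⊗χ₀*, taken over all zeros of Ω, also span ℂ^(Fin Na × Fin Nb), then Ω is nondecomposable optimal: for every entanglement witness Ω₀, all positive semidefinite Hermitian matrices ρ, σ, and every p ∈ (0,1), if Ω = (1−p)·Ω₀ + p·(ρ + σᴾ) then ρ = 0 and σ = 0. -/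
open Matrix
open scoped ComplexOrder

noncomputable section

/-!
At a zero `(φ₀, χ₀)` of `Ω = (1 - p) Ω₀ + p Q`, both `f_{Ω₀}` and `f_Q` are nonnegative, so
`f_Q(φ₀, χ₀) = 0`. For `Q = P` positive semidefinite this forces `P (φ₀ ⊗ χ₀) = 0`, and the
spanning hypothesis gives `P = 0`. For `Q = ρ + σᴾ` one uses `f_{σᴾ}(φ, χ) = f_σ(φ, χ*)`: both
terms vanish, so `ρ` kills every `φ₀ ⊗ χ₀` and `σ` every `φ₀ ⊗ χ₀*`.
-/

open EW

theorem Matrix.eq_zero_of_mulVec_eq_zero_of_span_eq_top {R n : Type*} [CommRing R] [Fintype n]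
    [DecidableEq n] {A : Matrix n n R} {s : Set (n → R)} (hs : Submodule.span R s = ⊤)
    (h : ∀ v ∈ s, A *ᵥ v = 0) : A = 0 :=
  toLin'.injective <| (LinearMap.ext_on hs fun v hv => by simpa using h v hv).trans
    (map_zero toLin').symm

theorem Matrix.PosSemidef.eq_zero_of_span_eq_top {n : Type*} [Fintype n] [DecidableEq n]
    {P : Matrix n n ℂ} (hP : P.PosSemidef) {s : Set (n → ℂ)} (hs : Submodule.span ℂ s = ⊤)
    (h : ∀ v ∈ s, pair P v v = 0) : P = 0 :=
  eq_zero_of_mulVec_eq_zero_of_span_eq_top hs fun v hv =>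
    (hP.dotProduct_mulVec_zero_iff v).mp (h v hv)

theorem Complex.eq_zero_of_convex_comb_eq_zero {p : ℝ} (hp : 0 < p) (hp1 : p < 1) {a b : ℂ}
    (ha : 0 ≤ a) (hb : 0 ≤ b) (h : (1 - p) • a + p • b = 0) : b = 0 := by
  have hpa : 0 ≤ (1 - p) • a := smul_nonneg (by linarith) ha
  have hpb : 0 ≤ p • b := smul_nonneg hp.le hb
  exact (smul_eq_zero.mp ((add_eq_zero_iff_of_nonneg hpa hpb).mp h).2).resolve_left hp.ne'

namespace EW

variable {Na Nb : ℕ}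

theorem biquad_add (A B : Mat Na Nb) (φ : Fin Na → ℂ) (χ : Fin Nb → ℂ) :
    biquad (A + B) φ χ = biquad A φ χ + biquad B φ χ := by
  simp only [biquad, pair, add_mulVec, dotProduct_add]

theorem biquad_smul (r : ℝ) (A : Mat Na Nb) (φ : Fin Na → ℂ) (χ : Fin Nb → ℂ) :
    biquad (r • A) φ χ = r • biquad A φ χ := by
  simp only [biquad, pair, smul_mulVec, dotProduct_smul]

theorem biquad_nonneg_of_posSemidef {P : Mat Na Nb} (hP : P.PosSemidef)
    (φ : Fin Na → ℂ) (χ : Fin Nb → ℂ) : 0 ≤ biquad P φ χ :=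
  hP.dotProduct_mulVec_nonneg _

theorem pair_eq_sum {n : Type*} [Fintype n] (A : Matrix n n ℂ) (x : n → ℂ) :
    pair A x x = ∑ r : n × n, star (x r.1) * (A r.1 r.2 * x r.2) := by
  rw [Fintype.sum_prod_type]
  simp only [pair, mulVec, dotProduct, Finset.mul_sum, Pi.star_apply]

theorem biquad_ptrans (σ : Mat Na Nb) (φ : Fin Na → ℂ) (χ : Fin Nb → ℂ) :
    biquad (ptrans σ) φ χ = biquad σ φ (star χ) := by
  rw [biquad, biquad, pair_eq_sum, pair_eq_sum]
  -- swap the second-factor indices of the row and the column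
  let e : ((Fin Na × Fin Nb) × (Fin Na × Fin Nb)) ≃ ((Fin Na × Fin Nb) × (Fin Na × Fin Nb)) :=
    ⟨fun r => ((r.1.1, r.2.2), (r.2.1, r.1.2)), fun r => ((r.1.1, r.2.2), (r.2.1, r.1.2)),
      fun _ => rfl, fun _ => rfl⟩
  refine Fintype.sum_equiv e _ _ fun ⟨⟨i, j⟩, ⟨k, l⟩⟩ => ?_
  simp only [e, kron, ptrans, Pi.star_apply, star_mul', star_star, Equiv.coe_fn_mk]
  ring

theorem biquad_eq_zero_of_isZeroOf_decomp {Ω Ω₀ Q : Mat Na Nb} {p : ℝ} (hp : 0 < p)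
    (hp1 : p < 1) (hΩ₀ : IsWitness Ω₀) (hdecomp : Ω = (1 - p) • Ω₀ + p • Q)
    {φ₀ : Fin Na → ℂ} {χ₀ : Fin Nb → ℂ} (hz : IsZeroOf Ω φ₀ χ₀) (hQ : 0 ≤ biquad Q φ₀ χ₀) :
    biquad Q φ₀ χ₀ = 0 := by
  refine Complex.eq_zero_of_convex_comb_eq_zero hp hp1 (hΩ₀.2 φ₀ χ₀) hQ ?_
  rw [← biquad_smul, ← biquad_smul, ← biquad_add, ← hdecomp]
  exact hz.2.2

end EW

theorem spanning_implies_optimal_general (Na Nb : ℕ) (Ω : Mat Na Nb)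
    (hspan : Submodule.span ℂ { v : Fin Na × Fin Nb → ℂ |
        ∃ φ₀ χ₀, IsZeroOf Ω φ₀ χ₀ ∧ v = kron φ₀ χ₀ } = ⊤) :
    (∀ Ω₀ : Mat Na Nb, IsWitness Ω₀ → ∀ P : Mat Na Nb, P.PosSemidef →
      ∀ p : ℝ, 0 < p → p < 1 → Ω = (1 - p) • Ω₀ + p • P → P = 0) ∧
    (Submodule.span ℂ { v : Fin Na × Fin Nb → ℂ |
        ∃ φ₀ χ₀, IsZeroOf Ω φ₀ χ₀ ∧ v = kron φ₀ (star χ₀) } = ⊤ →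
      ∀ Ω₀ : Mat Na Nb, IsWitness Ω₀ → ∀ ρ σ : Mat Na Nb, ρ.PosSemidef → σ.PosSemidef →
        ∀ p : ℝ, 0 < p → p < 1 → Ω = (1 - p) • Ω₀ + p • (ρ + ptrans σ) →
          ρ = 0 ∧ σ = 0) := by
  refine ⟨fun Ω₀ hΩ₀ P hP p hp hp1 hdecomp => ?_,
    fun hspan' Ω₀ hΩ₀ ρ σ hρ hσ p hp hp1 hdecomp => ?_⟩
  · refine hP.eq_zero_of_span_eq_top hspan ?_
    rintro _ ⟨φ₀, χ₀, hz, rfl⟩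
    exact biquad_eq_zero_of_isZeroOf_decomp hp hp1 hΩ₀ hdecomp hz
      (biquad_nonneg_of_posSemidef hP φ₀ χ₀)
  · have hvanish : ∀ φ₀ χ₀, IsZeroOf Ω φ₀ χ₀ →
        biquad ρ φ₀ χ₀ = 0 ∧ biquad σ φ₀ (star χ₀) = 0 := by
      intro φ₀ χ₀ hz
      have hρ0 := biquad_nonneg_of_posSemidef hρ φ₀ χ₀
      have hσ0 := biquad_nonneg_of_posSemidef hσ φ₀ (star χ₀)
      rw [← biquad_ptrans] at hσ0 ⊢
      have hsum : biquad (ρ + ptrans σ) φ₀ χ₀ = 0 :=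
        biquad_eq_zero_of_isZeroOf_decomp hp hp1 hΩ₀ hdecomp hz
          (by rw [biquad_add]; exact add_nonneg hρ0 hσ0)
      rw [biquad_add] at hsum
      exact (add_eq_zero_iff_of_nonneg hρ0 hσ0).mp hsum
    refine ⟨hρ.eq_zero_of_span_eq_top hspan ?_, hσ.eq_zero_of_span_eq_top hspan' ?_⟩
    · rintro _ ⟨φ₀, χ₀, hz, rfl⟩
      exact (hvanish φ₀ χ₀ hz).1
    · rintro _ ⟨φ₀, χ₀, hz, rfl⟩
      exact (hvanish φ₀ χ₀ hz).2

theorem spanning_implies_optimal (Na Nb : ℕ) (Ω : Mat Na Nb) (hΩ : IsWitness Ω)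
    (hspan : Submodule.span ℂ { v : Fin Na × Fin Nb → ℂ |
        ∃ φ₀ χ₀, IsZeroOf Ω φ₀ χ₀ ∧ v = kron φ₀ χ₀ } = ⊤) :
    (∀ Ω₀ : Mat Na Nb, IsWitness Ω₀ → ∀ P : Mat Na Nb, P.PosSemidef →
      ∀ p : ℝ, 0 < p → p < 1 → Ω = (1 - p) • Ω₀ + p • P → P = 0) ∧
    (Submodule.span ℂ { v : Fin Na × Fin Nb → ℂ |
        ∃ φ₀ χ₀, IsZeroOf Ω φ₀ χ₀ ∧ v = kron φ₀ (star χ₀) } = ⊤ →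
      ∀ Ω₀ : Mat Na Nb, IsWitness Ω₀ → ∀ ρ σ : Mat Na Nb, ρ.PosSemidef → σ.PosSemidef →
        ∀ p : ℝ, 0 < p → p < 1 → Ω = (1 - p) • Ω₀ + p • (ρ + ptrans σ) →
          ρ = 0 ∧ σ = 0) :=
  spanning_implies_optimal_general Na Nb Ω hspan
end
end
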